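/- arXiv:1802.09459 — 2 statements merged into one kernel-verified Lean document; each statement's English description precedes it below -/
import Mathlib

section
/- Let p be an odd prime and let G be a finite p-group with the Ω-extension property, i.e. there exists a p-central finite p-group H (meaning every element of order dividing p in H is central) with G ≅ H/Ω₁(H), where Ω₁(H) is the subgroup generated by the elements of order dividing p. Then G itself is p-central. -/
/-- `Omega1 G p` is the subgroup Ω₁(G) generated by the elements of order dividing `p`. -/
def Omega1 (G : Type*) [Group G] (p : ℕ) : Subgroup G :=
  Subgroup.closure {g : G | g ^ p = 1}

/-!
In a p-central p-group `H` with `p` odd, every `x` with `x ^ p ^ 2 = 1` satisfies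
`⁅x, y⁆ ^ p = 1` for all `y`. By induction on `|H|`: if `x` does not generate `H`, its normal
closure `M` is a proper subgroup, again p-central, so `c = ⁅y x y⁻¹, x⁻¹⁆` has order dividing `p`
and is central. Writing `⁅x, y⁆ = x (y x y⁻¹)⁻¹`, the class-two formula
`(a b) ^ p = a ^ p b ^ p c ^ (p choose 2)` and `p ∣ p choose 2` give
`⁅x, y⁆ ^ p = x ^ p (y x ^ p y⁻¹)⁻¹ = 1`, as `x ^ p` is central.

Hence if `x ^ p ∈ Ω₁(H)`, all commutators `⁅x, y⁆` lie in `Ω₁(H)` and the image of `x` is central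
in `H ⧸ Ω₁(H)`.
-/

open Subgroup
open scoped commutatorElement

section Omega1

variable {G : Type*} [Group G] {p : ℕ}

theorem omega1_eq_normalClosure : Omega1 G p = normalClosure {g : G | g ^ p = 1} := by
  refine le_antisymm (closure_mono Group.subset_conjugatesOfSet) (closure_mono fun g hg => ?_)
  obtain ⟨a, ha, hconj⟩ := Group.mem_conjugatesOfSet_iff.mp hg
  obtain ⟨c, rfl⟩ := isConj_iff.mp hconj
  change (c * a * c⁻¹) ^ p = 1
  rw [conj_pow, ha, mul_one, mul_inv_cancel]

instance omega1_normal : (Omega1 G p).Normal := by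
  rw [omega1_eq_normalClosure]
  infer_instance

theorem omega1_le_center_iff :
    Omega1 G p ≤ center G ↔ ∀ g : G, g ^ p = 1 → g ∈ center G :=
  closure_le _

theorem pow_eq_one_of_mem_omega1 (hG : Omega1 G p ≤ center G) {g : G} (hg : g ∈ Omega1 G p) :
    g ^ p = 1 := by
  induction hg using closure_induction with
  | mem g hg => exact hg
  | one => exact one_pow p
  | mul a b _ _ ha hb =>
    have hab : Commute b a := mem_center_iff.mp (omega1_le_center_iff.mp hG a ha) b
    rw [hab.symm.mul_pow, ha, hb, one_mul]
  | inv a _ ha => rw [inv_pow, ha, inv_one]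

theorem omega1_subgroup_le_center (hG : Omega1 G p ≤ center G) (K : Subgroup G) :
    Omega1 K p ≤ center K := by
  refine omega1_le_center_iff.mpr fun k hk => mem_center_iff.mpr fun l => Subtype.ext ?_
  have hk' : (k : G) ^ p = 1 := by exact_mod_cast congrArg Subtype.val hk
  exact mem_center_iff.mp (omega1_le_center_iff.mp hG k hk') l

theorem omega1_le_center_of_mulEquiv {K : Type*} [Group K] (e : G ≃* K)
    (hK : Omega1 K p ≤ center K) : Omega1 G p ≤ center G := by
  refine omega1_le_center_iff.mpr fun g hg => ?_
  refine (MulEquivClass.apply_mem_center_iff e).mp (omega1_le_center_iff.mp hK (e g) ?_)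
  rw [← map_pow, hg, map_one]

end Omega1

section ClassTwo

variable {G : Type*} [Group G]

theorem pow_mul_eq_mul_pow_mul_pow_of_mul_eq {a b c : G} (hc : c ∈ center G)
    (hba : b * a = a * b * c) (n : ℕ) : b ^ n * a = a * b ^ n * c ^ n := by
  induction n with
  | zero => simp
  | succ n ih =>
    calc b ^ (n + 1) * a = b ^ n * (b * a) := by group
      _ = b ^ n * a * b * c := by rw [hba]; group
      _ = a * b ^ n * (c ^ n * b) * c := by rw [ih]; group
      _ = a * b ^ (n + 1) * c ^ (n + 1) := by
          rw [← mem_center_iff.mp (pow_mem hc n) b, pow_succ, pow_succ]; group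

theorem mul_pow_of_commutator_mem_center {a b : G} (hc : ⁅b⁻¹, a⁻¹⁆ ∈ center G) (n : ℕ) :
    (a * b) ^ n = a ^ n * b ^ n * ⁅b⁻¹, a⁻¹⁆ ^ n.choose 2 := by
  set c := ⁅b⁻¹, a⁻¹⁆
  have hba : b * a = a * b * c := by simp only [c, commutatorElement_def]; group
  induction n with
  | zero => simp
  | succ n ih =>
    have hcomm : ∀ g : G, ∀ k : ℕ, g * c ^ k = c ^ k * g := fun g k =>
      mem_center_iff.mp (pow_mem hc k) g
    calc (a * b) ^ (n + 1) = a ^ n * b ^ n * (c ^ n.choose 2 * a) * b := by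
          rw [pow_succ, ih]; group
      _ = a ^ n * (b ^ n * a) * (c ^ n.choose 2 * b) := by rw [← hcomm a]; group
      _ = a ^ n * a * b ^ n * (c ^ n * b) * c ^ n.choose 2 := by
          rw [pow_mul_eq_mul_pow_mul_pow_of_mul_eq hc hba, ← hcomm b]; group
      _ = a ^ (n + 1) * b ^ (n + 1) * c ^ (n + 1).choose 2 := by
          rw [← hcomm, Nat.choose_succ_succ', Nat.choose_one_right, pow_add]; group

end ClassTwo

theorem normalClosure_singleton_ne_top {G : Type*} [Group G] [Finite G] [Group.IsNilpotent G]
    {x : G} (hx : zpowers x ≠ ⊤) : normalClosure {x} ≠ ⊤ := by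
  obtain ⟨U, hU, hxU⟩ := (eq_top_or_exists_le_coatom (zpowers x)).resolve_left hx
  have : U.Normal := Group.normalizerCondition_of_isNilpotent.normal_of_coatom U hU
  have hMU : normalClosure {x} ≤ U :=
    normalClosure_le_normal (Set.singleton_subset_iff.mpr (hxU (mem_zpowers x)))
  exact fun h => hU.1 (top_le_iff.mp (h ▸ hMU))

theorem IsPGroup.commutator_pow_eq_one_of_pow_sq_eq_one {p : ℕ} (hp : p.Prime) (hodd : p ≠ 2)
    {H : Type*} [Group H] [Finite H] (hH : IsPGroup p H) (hcent : Omega1 H p ≤ center H)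
    {x : H} (hx : x ^ p ^ 2 = 1) (y : H) : ⁅x, y⁆ ^ p = 1 := by
  have : Fact p.Prime := ⟨hp⟩
  induction hn : Nat.card H using Nat.strong_induction_on generalizing H with
  | _ n ih =>
  by_cases hgen : zpowers x = ⊤
  · have : Commute x y := by
      obtain ⟨k, rfl⟩ := hgen ▸ mem_top y
      exact (Commute.refl x).zpow_right k
    rw [commutatorElement_eq_one_iff_commute.mpr this, one_pow]
  have : Group.IsNilpotent H := hH.isNilpotent
  set M := normalClosure {x}
  have hxM : x ∈ M := subset_normalClosure rfl
  have hM : Nat.card M < n :=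
    hn ▸ (card_le_card_group M).lt_of_ne (mt (card_eq_iff_eq_top M).mp
      (normalClosure_singleton_ne_top hgen))
  have ihM : ∀ a ∈ M, ∀ b ∈ M, a ^ p ^ 2 = 1 → ⁅a, b⁆ ^ p = 1 := fun a ha b hb hap => by
    have h := ih _ hM (hH.to_subgroup M) (omega1_subgroup_le_center hcent M)
      (x := ⟨a, ha⟩) (Subtype.ext (by simpa using hap)) ⟨b, hb⟩ rfl
    have h' := congrArg M.subtype h
    rwa [map_pow, map_commutatorElement, map_one] at h'
  have hpcent : ∀ g : H, g ^ p = 1 → g ∈ center H := omega1_le_center_iff.mp hcent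
  set w := y * x * y⁻¹
  have hw : w ^ p ^ 2 = 1 := by rw [conj_pow, hx, mul_one, mul_inv_cancel]
  have hc : ⁅w, x⁻¹⁆ ^ p = 1 :=
    ihM w (normalClosure_normal.conj_mem x hxM y) x⁻¹ (inv_mem hxM) hw
  have hxp : x ^ p ∈ center H := hpcent _ (by rw [← pow_mul, ← sq, hx])
  obtain ⟨k, hk⟩ : p ∣ p.choose 2 := hp.dvd_choose_self two_ne_zero (hp.two_le.lt_of_ne' hodd)
  calc ⁅x, y⁆ ^ p = (x * w⁻¹) ^ p := by simp only [w, commutatorElement_def]; group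
    _ = x ^ p * (y * x ^ p * y⁻¹)⁻¹ := by
        rw [mul_pow_of_commutator_mem_center (by simpa using hpcent _ hc), inv_inv,
          hk, pow_mul, hc, one_pow, mul_one, inv_pow, conj_pow]
    _ = 1 := by rw [mem_center_iff.mp hxp y]; group

theorem IsPGroup.omega1_quotient_omega1_le_center {p : ℕ} (hp : p.Prime) (hodd : p ≠ 2)
    {H : Type*} [Group H] [Finite H] (hH : IsPGroup p H) (hcent : Omega1 H p ≤ center H) :
    Omega1 (H ⧸ Omega1 H p) p ≤ center (H ⧸ Omega1 H p) := by
  refine omega1_le_center_iff.mpr fun q hq => mem_center_iff.mpr fun r => ?_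
  obtain ⟨x, rfl⟩ := QuotientGroup.mk_surjective q
  obtain ⟨y, rfl⟩ := QuotientGroup.mk_surjective r
  have hxp : x ^ p ∈ Omega1 H p := by
    rwa [← QuotientGroup.eq_one_iff, QuotientGroup.mk_pow]
  have hx : x ^ p ^ 2 = 1 := by rw [sq, pow_mul, pow_eq_one_of_mem_omega1 hcent hxp]
  have hxy : ⁅x, y⁆ ∈ Omega1 H p :=
    subset_closure (hH.commutator_pow_eq_one_of_pow_sq_eq_one hp hodd hcent hx y)
  rw [← QuotientGroup.eq_one_iff, ← QuotientGroup.mk'_apply, map_commutatorElement,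
    commutatorElement_eq_one_iff_commute] at hxy
  exact hxy.symm.eq

theorem omega_extension_property_implies_pCentral_general
    {p : ℕ} (hp : p.Prime) (hodd : p ≠ 2)
    {G : Type*} [Group G]
    {H : Type*} [Group H] [Fintype H] (hH : IsPGroup p H)
    (hHcentral : Omega1 H p ≤ Subgroup.center H)
    (N : Subgroup H) (hN : N = Omega1 H p) [N.Normal]
    (e : G ≃* H ⧸ N) :
    Omega1 G p ≤ Subgroup.center G := by
  subst hN
  exact omega1_le_center_of_mulEquiv e (hH.omega1_quotient_omega1_le_center hp hodd hHcentral)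

/-- If an odd-prime `p`-group `G` has the Ω-extension property (G ≅ H/Ω₁(H) for some
p-central finite p-group H), then `G` is p-central. -/
theorem omega_extension_property_implies_pCentral
    {p : ℕ} (hp : p.Prime) (hodd : p ≠ 2)
    {G : Type*} [Group G] [Fintype G] (hG : IsPGroup p G)
    {H : Type*} [Group H] [Fintype H] (hH : IsPGroup p H)
    (hHcentral : Omega1 H p ≤ Subgroup.center H)
    (N : Subgroup H) (hN : N = Omega1 H p) [N.Normal]
    (e : G ≃* H ⧸ N) :
    Omega1 G p ≤ Subgroup.center G :=
  omega_extension_property_implies_pCentral_general hp hodd hH hHcentral N hN e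
end

section
/- Let p be an odd prime, let c and k be positive integers with k - 1 ≥ log_p(c+1) (equivalently p^{k-1} ≥ c+1), and let G be a finitely generated nilpotent group of nilpotency class at most c. Set K = G^{p^k}, the subgroup generated by all p^k-th powers. Then for every normal subgroup N of G one has [N, K] ≤ N^p. In particular K is powerful, i.e. [K, K] ≤ K^p. -/
/-!
Modulo `N^p` the image of `N` is a normal subgroup of exponent `p`, so it suffices to show that
`g ^ p ^ k` centralizes every normal subgroup `P` of exponent `p` of a group of class `≤ c < p ^ k`.
As `m g^(p^k) m⁻¹ = (⁅m, g⁆ g)^(p^k)`, this amounts to `(x y)^(p^k) = y^(p^k)` for `x ∈ P`.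

The sequence `u n = (x y)^n y^(-n)` takes values in `P` and is polynomial with respect to the
filtration `γᵢ(G) ⊓ P` (polynomial sequences form a group, by Leibman's argument). Such a sequence
has a Taylor expansion `u n = ∏_{i ≤ c} gᵢ ^ (n choose i)` with `gᵢ ∈ γᵢ(G) ⊓ P`, obtained by
induction on `c`: lift the expansion from the quotient by the last term of the filtration, and
expand the abelian error term by Newton's forward difference formula. For `n = p ^ k` each
`p ^ k choose i` with `0 < i ≤ c` is divisible by `p`, hence `u (p ^ k) = u 0 = 1`.
-/

/-- `subPow N m` is the subgroup generated by the `m`-th powers of elements of `N`. -/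
def subPow {G : Type*} [Group G] (N : Subgroup G) (m : ℕ) : Subgroup G :=
  Subgroup.closure {x : G | ∃ n ∈ N, n ^ m = x}

open scoped commutatorElement

section PolynomialSequences

variable {G : Type*} [Group G]

def mulFwdDiff (f : ℕ → G) : ℕ → G := fun n => (f n)⁻¹ * f (n + 1)

def binomProd (g : ℕ → G) (m n : ℕ) : G :=
  ((List.range m).map fun i => g i ^ n.choose i).prod

structure IsGroupFiltration (F : ℕ → Subgroup G) : Prop where
  antitone : Antitone F
  commutator_le : ∀ i j, ⁅F i, F j⁆ ≤ F (i + j)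

def IsPolyUpTo (F : ℕ → Subgroup G) (s a : ℕ) (f : ℕ → G) : Prop :=
  ∀ i ≤ s, ∀ n, mulFwdDiff^[i] f n ∈ F (a + i)

def IsPolySeq (F : ℕ → Subgroup G) (f : ℕ → G) : Prop :=
  ∀ i n, mulFwdDiff^[i] f n ∈ F i

variable {F : ℕ → Subgroup G} {s a : ℕ} {f g : ℕ → G}

lemma mulFwdDiff_inv : mulFwdDiff f⁻¹ = (mulFwdDiff f)⁻¹ * ⁅mulFwdDiff f, f⁆ := by
  funext n
  simp only [mulFwdDiff, Pi.mul_apply, Pi.inv_apply, commutatorElement_def]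
  group

lemma mulFwdDiff_mul :
    mulFwdDiff (f * g) = mulFwdDiff f * ⁅(mulFwdDiff f)⁻¹, g⁻¹⁆ * mulFwdDiff g := by
  funext n
  simp only [mulFwdDiff, Pi.mul_apply, Pi.inv_apply, commutatorElement_def]
  group

-- Write `f (n + 1) = f n * mulFwdDiff f n`, likewise for `g`, and expand
-- with `⁅xy, z⁆ = x⁅y, z⁆x⁻¹⁅x, z⁆` and `⁅x, yz⁆ = ⁅x, y⁆y⁅x, z⁆y⁻¹`.
lemma mulFwdDiff_commutator :
    mulFwdDiff ⁅f, g⁆ =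
      ⁅g, f⁆ * (f * (⁅mulFwdDiff f, g⁆ * (g * ⁅mulFwdDiff f, mulFwdDiff g⁆ * g⁻¹)) * f⁻¹) *
        ⁅g, f⁆⁻¹ * (g * ⁅f, mulFwdDiff g⁆ * g⁻¹) := by
  funext n
  simp only [mulFwdDiff, Pi.mul_apply, Pi.inv_apply, commutatorElement_def]
  group

lemma isPolyUpTo_zero_iff : IsPolyUpTo F 0 a f ↔ ∀ n, f n ∈ F a := by
  simp [IsPolyUpTo]

lemma isPolyUpTo_succ_iff :
    IsPolyUpTo F (s + 1) a f ↔ (∀ n, f n ∈ F a) ∧ IsPolyUpTo F s (a + 1) (mulFwdDiff f) := by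
  refine ⟨fun hf => ⟨hf 0 (Nat.zero_le _), fun i hi n => ?_⟩, fun ⟨h0, hf⟩ i hi n => ?_⟩
  · rw [add_right_comm, ← Function.iterate_succ_apply]
    exact hf (i + 1) (by omega) n
  · rcases i with _ | i
    · exact h0 n
    · rw [Function.iterate_succ_apply, ← add_assoc, add_right_comm]
      exact hf i (by omega) n

lemma IsGroupFiltration.commute_of_mem (hF : IsGroupFiltration F) (h01 : F 0 = F 1) {c : ℕ}
    (hc : F (c + 2) = ⊥) {z x : G} (hz : z ∈ F (c + 1)) (hx : x ∈ F 0) : Commute z x := by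
  have := hF.commutator_le (c + 1) 1 (Subgroup.commutator_mem_commutator hz (h01 ▸ hx))
  rwa [hc, Subgroup.mem_bot, commutatorElement_eq_one_iff_mul_comm] at this

lemma IsPolyUpTo.mono (hF : Antitone F) (hf : IsPolyUpTo F s a f) {s' b : ℕ} (hs : s' ≤ s)
    (hb : b ≤ a) : IsPolyUpTo F s' b f :=
  fun i hi n => hF (by omega) (hf i (hi.trans hs) n)

lemma isPolyUpTo_one : IsPolyUpTo F s a (1 : ℕ → G) := by
  intro i _ n
  rw [Function.iterate_fixed (by funext; simp [mulFwdDiff])]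
  exact one_mem _

structure ClosedUpTo (F : ℕ → Subgroup G) (s : ℕ) : Prop where
  inv {a : ℕ} {f : ℕ → G} : IsPolyUpTo F s a f → IsPolyUpTo F s a f⁻¹
  mul {a : ℕ} {f g : ℕ → G} : IsPolyUpTo F s a f → IsPolyUpTo F s a g → IsPolyUpTo F s a (f * g)
  commutator {a b : ℕ} {f g : ℕ → G} :
    IsPolyUpTo F s a f → IsPolyUpTo F s b g → IsPolyUpTo F s (a + b) ⁅f, g⁆

lemma closedUpTo_zero (hF : IsGroupFiltration F) : ClosedUpTo F 0 where
  inv hf := isPolyUpTo_zero_iff.2 fun n => inv_mem (isPolyUpTo_zero_iff.1 hf n)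
  mul hf hg := isPolyUpTo_zero_iff.2 fun n =>
    mul_mem (isPolyUpTo_zero_iff.1 hf n) (isPolyUpTo_zero_iff.1 hg n)
  commutator hf hg := isPolyUpTo_zero_iff.2 fun n => hF.commutator_le _ _
    (Subgroup.commutator_mem_commutator (isPolyUpTo_zero_iff.1 hf n) (isPolyUpTo_zero_iff.1 hg n))

lemma ClosedUpTo.conj (hF : Antitone F) (h : ClosedUpTo F s) {b : ℕ} {x t : ℕ → G}
    (hx : IsPolyUpTo F s a x) (ht : IsPolyUpTo F s b t) : IsPolyUpTo F s b (x * t * x⁻¹) := by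
  rw [show x * t * x⁻¹ = ⁅x, t⁆ * t by group]
  exact h.mul ((h.commutator hx ht).mono hF le_rfl (by omega)) ht

lemma ClosedUpTo.succ (hF : IsGroupFiltration F) (h : ClosedUpTo F s) : ClosedUpTo F (s + 1) := by
  have lower {a : ℕ} {f : ℕ → G} (hf : IsPolyUpTo F (s + 1) a f) : IsPolyUpTo F s a f :=
    hf.mono hF.antitone s.le_succ le_rfl
  refine ⟨fun {a f} hf => ?_, fun {a f g} hf hg => ?_, fun {a b f g} hf hg => ?_⟩
  · obtain ⟨hf0, hdf⟩ := isPolyUpTo_succ_iff.1 hf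
    refine isPolyUpTo_succ_iff.2 ⟨fun n => inv_mem (hf0 n), ?_⟩
    rw [mulFwdDiff_inv]
    exact h.mul (h.inv hdf) ((h.commutator hdf (lower hf)).mono hF.antitone le_rfl (by omega))
  · obtain ⟨hf0, hdf⟩ := isPolyUpTo_succ_iff.1 hf
    obtain ⟨hg0, hdg⟩ := isPolyUpTo_succ_iff.1 hg
    refine isPolyUpTo_succ_iff.2 ⟨fun n => mul_mem (hf0 n) (hg0 n), ?_⟩
    rw [mulFwdDiff_mul]
    refine h.mul (h.mul hdf ?_) hdg
    exact (h.commutator (h.inv hdf) (h.inv (lower hg))).mono hF.antitone le_rfl (by omega)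
  · obtain ⟨hf0, hdf⟩ := isPolyUpTo_succ_iff.1 hf
    obtain ⟨hg0, hdg⟩ := isPolyUpTo_succ_iff.1 hg
    refine isPolyUpTo_succ_iff.2 ⟨fun n => hF.commutator_le a b
      (Subgroup.commutator_mem_commutator (hf0 n) (hg0 n)), ?_⟩
    have hA : IsPolyUpTo F s (a + b + 1)
        (f * (⁅mulFwdDiff f, g⁆ * (g * ⁅mulFwdDiff f, mulFwdDiff g⁆ * g⁻¹)) * f⁻¹) :=
      h.conj hF.antitone (lower hf) <| h.mul
        ((h.commutator hdf (lower hg)).mono hF.antitone le_rfl (by omega))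
        ((h.conj hF.antitone (lower hg) (h.commutator hdf hdg)).mono hF.antitone le_rfl
          (by omega))
    have hB : IsPolyUpTo F s (a + b + 1) (g * ⁅f, mulFwdDiff g⁆ * g⁻¹) :=
      (h.conj hF.antitone (lower hg) (h.commutator (lower hf) hdg)).mono hF.antitone le_rfl
        (by omega)
    rw [mulFwdDiff_commutator]
    exact h.mul (h.conj hF.antitone (h.commutator (lower hg) (lower hf)) hA) hB

theorem closedUpTo (hF : IsGroupFiltration F) : ∀ s, ClosedUpTo F s
  | 0 => closedUpTo_zero hF
  | s + 1 => (closedUpTo hF s).succ hF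

lemma isPolySeq_iff_forall_isPolyUpTo : IsPolySeq F f ↔ ∀ s, IsPolyUpTo F s 0 f := by
  simp only [IsPolySeq, IsPolyUpTo, zero_add]
  exact ⟨fun hf s i _ => hf i, fun hf i => hf i i le_rfl⟩

lemma IsPolySeq.inv (hF : IsGroupFiltration F) (hf : IsPolySeq F f) : IsPolySeq F f⁻¹ :=
  isPolySeq_iff_forall_isPolyUpTo.2 fun s =>
    (closedUpTo hF s).inv (isPolySeq_iff_forall_isPolyUpTo.1 hf s)

lemma IsPolySeq.mul (hF : IsGroupFiltration F) (hf : IsPolySeq F f) (hg : IsPolySeq F g) :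
    IsPolySeq F (f * g) :=
  isPolySeq_iff_forall_isPolyUpTo.2 fun s => (closedUpTo hF s).mul
    (isPolySeq_iff_forall_isPolyUpTo.1 hf s) (isPolySeq_iff_forall_isPolyUpTo.1 hg s)

lemma mulFwdDiff_pow_choose_succ (x : G) (i : ℕ) :
    mulFwdDiff (fun n => x ^ n.choose (i + 1)) = fun n => x ^ n.choose i := by
  funext n
  rw [mulFwdDiff, Nat.choose_succ_succ', Nat.add_comm (n.choose i), pow_add, inv_mul_cancel_left]

lemma isPolyUpTo_pow_choose (hF : Antitone F) {x : G} {i : ℕ} (hx : x ∈ F (a + i)) :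
    IsPolyUpTo F s a (fun n => x ^ n.choose i) := by
  induction s generalizing a i with
  | zero => exact isPolyUpTo_zero_iff.2 fun n => hF (by omega) (pow_mem hx _)
  | succ s ih =>
    refine isPolyUpTo_succ_iff.2 ⟨fun n => hF (by omega) (pow_mem hx _), ?_⟩
    rcases i with _ | i
    · convert isPolyUpTo_one
      funext n
      simp [mulFwdDiff]
    · rw [mulFwdDiff_pow_choose_succ]
      exact ih (by rwa [add_right_comm, add_assoc])

lemma isPolySeq_pow_choose (hF : Antitone F) {x : G} {i : ℕ} (hx : x ∈ F i) :
    IsPolySeq F (fun n => x ^ n.choose i) :=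
  isPolySeq_iff_forall_isPolyUpTo.2 fun _ => isPolyUpTo_pow_choose hF (by rwa [zero_add])

lemma binomProd_succ (g : ℕ → G) (m n : ℕ) :
    binomProd g (m + 1) n = binomProd g m n * g m ^ n.choose m := by
  simp [binomProd, List.range_succ]

lemma isPolySeq_binomProd (hF : IsGroupFiltration F) (hg : ∀ i, g i ∈ F i) (m : ℕ) :
    IsPolySeq F (binomProd g m) := by
  induction m with
  | zero =>
    refine isPolySeq_iff_forall_isPolyUpTo.2 fun _ => ?_
    convert isPolyUpTo_one
    funext
    simp [binomProd]
  | succ m ih =>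
    rw [show binomProd g (m + 1) = binomProd g m * fun n => g m ^ n.choose m from
      funext (binomProd_succ g m)]
    exact ih.mul hF (isPolySeq_pow_choose hF.antitone (hg m))

lemma binomProd_mul {w : ℕ → G} (hgw : ∀ i j, Commute (g i) (w j)) (m n : ℕ) :
    binomProd (g * w) m n = binomProd g m n * binomProd w m n := by
  induction m with
  | zero => simp [binomProd]
  | succ m ih =>
    have hcomm : Commute (binomProd w m n) (g m ^ n.choose m) :=
      Commute.list_prod_left _ _ fun x hx => by
        obtain ⟨j, -, rfl⟩ := List.mem_map.1 hx
        exact ((hgw m j).pow_pow _ _).symm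
    simp only [binomProd_succ, ih, Pi.mul_apply, (hgw m m).mul_pow, mul_assoc, hcomm.left_comm]

lemma mulFwdDiff_iter_mem {H : Subgroup G} (hf : ∀ n, f n ∈ H) (i n : ℕ) :
    mulFwdDiff^[i] f n ∈ H := by
  induction i generalizing f with
  | zero => exact hf n
  | succ i ih => exact ih (fun n => mul_mem (inv_mem (hf n)) (hf (n + 1)))

lemma IsPolySeq.apply_eq_apply_zero (hf : IsPolySeq F f) (h1 : F 1 = ⊥) (n : ℕ) : f n = f 0 := by
  induction n with
  | zero => rfl
  | succ n ih =>
    have hd : mulFwdDiff f n = 1 := by simpa [h1] using hf 1 n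
    rw [← ih, ← mul_inv_cancel_left (f n) (f (n + 1)), ← mulFwdDiff, hd, mul_one]

section Map

variable {H : Type*} [Group H] (φ : G →* H)

lemma mulFwdDiff_iter_comp (f : ℕ → G) (i : ℕ) :
    mulFwdDiff^[i] (φ ∘ f) = φ ∘ mulFwdDiff^[i] f := by
  refine (Function.Semiconj.iterate_right (f := (φ ∘ ·)) (fun f => ?_) i f).symm
  funext n
  simp [mulFwdDiff]

lemma map_binomProd (g : ℕ → G) (m n : ℕ) : φ (binomProd g m n) = binomProd (φ ∘ g) m n := by
  simp [binomProd, map_list_prod, Function.comp_def]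

lemma IsGroupFiltration.map (hF : IsGroupFiltration F) :
    IsGroupFiltration fun i => (F i).map φ where
  antitone _ _ h := Subgroup.map_mono (hF.antitone h)
  commutator_le i j := by
    rw [← Subgroup.map_commutator]
    exact Subgroup.map_mono (hF.commutator_le i j)

lemma IsPolySeq.map (hf : IsPolySeq F f) : IsPolySeq (fun i => (F i).map φ) (φ ∘ f) := by
  intro i n
  rw [mulFwdDiff_iter_comp]
  exact Subgroup.mem_map_of_mem φ (hf i n)

end Map

end PolynomialSequences

section Newton

variable {A : Type*} [CommGroup A]

lemma ofMul_comp_mulFwdDiff_iter (e : ℕ → A) (i : ℕ) :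
    Additive.ofMul ∘ mulFwdDiff^[i] e = (fwdDiff 1)^[i] (Additive.ofMul ∘ e) := by
  refine Function.Semiconj.iterate_right (f := (Additive.ofMul ∘ ·)) (fun e => ?_) i e
  funext n
  simp [mulFwdDiff, fwdDiff, sub_eq_neg_add]

lemma binomProd_eq_prod (g : ℕ → A) (m n : ℕ) :
    binomProd g m n = ∏ i ∈ Finset.range m, g i ^ n.choose i := by
  induction m with
  | zero => rfl
  | succ m ih => rw [binomProd_succ, ih, Finset.prod_range_succ]

theorem eq_binomProd_mulFwdDiff_iter {e : ℕ → A} {d : ℕ}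
    (he : ∀ k, d < k → mulFwdDiff^[k] e 0 = 1) (n : ℕ) :
    e n = binomProd (fun i => mulFwdDiff^[i] e 0) (d + 1) n := by
  have newton := congrArg Additive.toMul (shift_eq_sum_fwdDiff_iter 1 (Additive.ofMul ∘ e) n 0)
  simp only [← ofMul_comp_mulFwdDiff_iter, zero_add, smul_eq_mul, mul_one, Function.comp_apply,
    toMul_ofMul, toMul_sum, toMul_nsmul] at newton
  rw [newton, binomProd_eq_prod]
  calc _ = ∏ i ∈ Finset.range (n + d + 1), mulFwdDiff^[i] e 0 ^ n.choose i :=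
        Finset.prod_subset (Finset.range_subset_range.2 (by omega)) fun k _ hk => by
          rw [Finset.mem_range, not_lt] at hk
          rw [Nat.choose_eq_zero_of_lt (by omega), pow_zero]
    _ = _ := (Finset.prod_subset (Finset.range_subset_range.2 (by omega)) fun k _ hk => by
          rw [Finset.mem_range, not_lt] at hk
          rw [he k (by omega), one_pow]).symm

end Newton

theorem eq_binomProd_of_forall_mem {G : Type*} [Group G] {Z : Subgroup G}
    (hZ : ∀ a ∈ Z, ∀ b ∈ Z, a * b = b * a) {e : ℕ → G} (heZ : ∀ n, e n ∈ Z) {d : ℕ}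
    (he : ∀ k, d < k → mulFwdDiff^[k] e 0 = 1) (n : ℕ) :
    e n = binomProd (fun i => mulFwdDiff^[i] e 0) (d + 1) n := by
  let _ : CommGroup Z := { (inferInstance : Group Z) with
    mul_comm := fun a b => Subtype.ext (hZ _ a.2 _ b.2) }
  let e' : ℕ → Z := fun n => ⟨e n, heZ n⟩
  have hsub : ∀ i, Z.subtype ∘ mulFwdDiff^[i] e' = mulFwdDiff^[i] e := fun i =>
    (mulFwdDiff_iter_comp Z.subtype e' i).symm
  have := congrArg Z.subtype <| eq_binomProd_mulFwdDiff_iter (e := e') (d := d)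
    (fun k hk => Subtype.ext <| (congrFun (hsub k) 0).trans (he k hk)) n
  rw [map_binomProd] at this
  exact this.trans (congrArg (binomProd · (d + 1) n) (funext fun i => congrFun (hsub i) 0))

theorem IsPolySeq.exists_eq_binomProd {G : Type*} [Group G] {F : ℕ → Subgroup G}
    (hF : IsGroupFiltration F) (hnormal : ∀ i, (F i).Normal) (h01 : F 0 = F 1) {c : ℕ}
    (hc : F (c + 1) = ⊥) {f : ℕ → G} (hf : IsPolySeq F f) :
    ∃ g : ℕ → G, (∀ i, g i ∈ F i) ∧ ∀ n, f n = binomProd g (c + 1) n := by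
  induction c generalizing G with
  | zero =>
    refine ⟨Pi.mulSingle 0 (f 0), fun i => ?_, fun n => ?_⟩
    · rcases i with _ | i
      · simpa using hf 0 0
      · simp [one_mem]
    · simp [binomProd, hf.apply_eq_apply_zero hc n]
  | succ c ih =>
    let Z := F (c + 1)
    let π := QuotientGroup.mk' Z
    have hπ : Function.Surjective π := QuotientGroup.mk'_surjective Z
    obtain ⟨g', hg', hfg'⟩ := ih (hF.map π) (fun i => (hnormal i).map π hπ)
      (congrArg (Subgroup.map π) h01) (by simp [Z, π]) (hf.map π)
    choose g hg hgπ using fun i => Subgroup.mem_map.1 (hg' i)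
    let e := (binomProd g (c + 2))⁻¹ * f
    have he : IsPolySeq F e := ((isPolySeq_binomProd hF hg _).inv hF).mul hF hf
    have heZ : ∀ n, e n ∈ Z := by
      intro n
      have hlast : g' (c + 1) = 1 := by simpa [Z, π] using hg' (c + 1)
      have hπe : π (binomProd g (c + 2) n) = π (f n) := by
        rw [map_binomProd, show π ∘ g = g' from funext hgπ, binomProd_succ, hlast, one_pow,
          mul_one, ← hfg' n, Function.comp_apply]
      rw [← QuotientGroup.ker_mk' Z, MonoidHom.mem_ker]
      change π ((binomProd g (c + 2) n)⁻¹ * f n) = 1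
      rw [map_mul, map_inv, hπe, inv_mul_cancel]
    have hnewton := eq_binomProd_of_forall_mem
      (fun a ha b hb => (hF.commute_of_mem h01 hc ha (hF.antitone (Nat.zero_le _) hb)).eq) heZ
      (d := c + 1) (fun k hk => by simpa [le_bot_iff.1 ((hF.antitone hk).trans_eq hc)] using he k 0)
    refine ⟨g * fun i => mulFwdDiff^[i] e 0, fun i => mul_mem (hg i) (he i 0), fun n => ?_⟩
    rw [binomProd_mul fun i j => (hF.commute_of_mem h01 hc (mulFwdDiff_iter_mem heZ j 0)
      (hF.antitone (Nat.zero_le i) (hg i))).symm, ← hnewton]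
    simp [e]

section LowerCentralSeries

variable {G : Type*} [Group G]

lemma Subgroup.commutator_commutator_le_of_rotate {A B C N : Subgroup G} [N.Normal]
    (h1 : ⁅⁅B, C⁆, A⁆ ≤ N) (h2 : ⁅⁅C, A⁆, B⁆ ≤ N) : ⁅⁅A, B⁆, C⁆ ≤ N := by
  simp only [← QuotientGroup.ker_mk' N, ← Subgroup.map_eq_bot_iff, Subgroup.map_commutator]
    at h1 h2 ⊢
  exact Subgroup.commutator_commutator_eq_bot_of_rotate h1 h2

lemma commutator_lowerCentralSeries_le (i j : ℕ) :
    ⁅(⊤ : Subgroup G).lowerCentralSeries i, (⊤ : Subgroup G).lowerCentralSeries j⁆ ≤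
      (⊤ : Subgroup G).lowerCentralSeries (i + j + 1) := by
  induction j generalizing i with
  | zero => rfl
  | succ j ih =>
    rw [Subgroup.commutator_comm, Subgroup.lowerCentralSeries_succ]
    refine Subgroup.commutator_commutator_le_of_rotate ?_ ?_
    · rw [Subgroup.commutator_comm ⊤, ← Subgroup.lowerCentralSeries_succ]
      exact (ih (i + 1)).trans_eq (by rw [show i + 1 + j + 1 = i + (j + 1) + 1 by omega])
    · exact (Subgroup.commutator_mono (ih i) le_rfl).trans_eq
        (by rw [← Subgroup.lowerCentralSeries_succ, show i + j + 1 + 1 = i + (j + 1) + 1 by omega])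

/-- `γᵢ(G)` in the usual indexing `γ₁(G) = G`, extended by `γ₀(G) = G`. -/
def lowerCentralFiltration (G : Type*) [Group G] (i : ℕ) : Subgroup G :=
  (⊤ : Subgroup G).lowerCentralSeries (i - 1)

instance lowerCentralFiltration_normal (i : ℕ) : (lowerCentralFiltration G i).Normal := by
  unfold lowerCentralFiltration
  infer_instance

lemma isGroupFiltration_lowerCentralFiltration : IsGroupFiltration (lowerCentralFiltration G) where
  antitone _ _ h := Subgroup.lowerCentralSeries_antitone _ (by omega)
  commutator_le _ _ :=
    (commutator_lowerCentralSeries_le _ _).trans (Subgroup.lowerCentralSeries_antitone _ (by omega))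

lemma IsGroupFiltration.inf {F : ℕ → Subgroup G} (hF : IsGroupFiltration F) (P : Subgroup G) :
    IsGroupFiltration fun i => F i ⊓ P where
  antitone _ _ h := inf_le_inf_right P (hF.antitone h)
  commutator_le i j := le_inf
    ((Subgroup.commutator_mono inf_le_left inf_le_left).trans (hF.commutator_le i j))
    ((Subgroup.commutator_mono inf_le_right inf_le_right).trans (Subgroup.commutator_le_self P))

end LowerCentralSeries

lemma binomProd_prime_pow_eq_binomProd_zero {G : Type*} [Group G] {p k m : ℕ} (hp : p.Prime)
    (hm : m ≤ p ^ k) {g : ℕ → G} (hg : ∀ i, 0 < i → g i ^ p = 1) :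
    binomProd g m (p ^ k) = binomProd g m 0 := by
  induction m with
  | zero => rfl
  | succ m ih =>
    rw [binomProd_succ, binomProd_succ, ih (by omega)]
    rcases m with _ | m
    · simp
    · obtain ⟨t, ht⟩ := hp.dvd_choose_pow m.succ_ne_zero (show m + 1 ≠ p ^ k by omega)
      rw [ht, pow_mul, hg _ m.succ_pos, one_pow, Nat.choose_zero_succ, pow_zero]

section PrimePowers

variable {G : Type*} [Group G] {p c k : ℕ} {P : Subgroup G} [P.Normal]

theorem mul_pow_prime_pow_of_mem (hp : p.Prime) (hck : c < p ^ k)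
    (hnil : (⊤ : Subgroup G).lowerCentralSeries c = ⊥) (hP : ∀ a ∈ P, a ^ p = 1) {x : G}
    (hx : x ∈ P) (y : G) : (x * y) ^ p ^ k = y ^ p ^ k := by
  have hΓ := isGroupFiltration_lowerCentralFiltration (G := G)
  let u : ℕ → G := (fun n => (x * y) ^ n) * (fun n => y ^ n)⁻¹
  have huP : ∀ n, u n ∈ P := by
    intro n
    rw [← QuotientGroup.eq_one_iff]
    simp [u, (QuotientGroup.eq_one_iff x).2 hx]
  have hu : IsPolySeq (fun i => lowerCentralFiltration G i ⊓ P) u := by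
    have hpow (a : G) : IsPolySeq (lowerCentralFiltration G) (fun n => a ^ n) := by
      simpa using isPolySeq_pow_choose hΓ.antitone (i := 1) (Subgroup.mem_top a)
    exact fun i n => ⟨((hpow _).mul hΓ ((hpow y).inv hΓ)) i n, mulFwdDiff_iter_mem huP i n⟩
  obtain ⟨g, hg, hug⟩ := hu.exists_eq_binomProd (hΓ.inf P)
    (fun i => Subgroup.normal_inf_normal _ _) rfl (c := c) (by simp [lowerCentralFiltration, hnil])
  have hu_pk : u (p ^ k) = u 0 := by
    rw [hug, hug, binomProd_prime_pow_eq_binomProd_zero hp hck fun i _ => hP _ (hg i).2]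
  simpa [u, mul_inv_eq_one] using hu_pk

theorem commute_pow_prime_pow_of_mem (hp : p.Prime) (hck : c < p ^ k)
    (hnil : (⊤ : Subgroup G).lowerCentralSeries c = ⊥) (hP : ∀ a ∈ P, a ^ p = 1) {m : G}
    (hm : m ∈ P) (g : G) : Commute m (g ^ p ^ k) := by
  have hmg : ⁅m, g⁆ ∈ P := Subgroup.commutator_le_left P ⊤
    (Subgroup.commutator_mem_commutator hm (Subgroup.mem_top g))
  have h := mul_pow_prime_pow_of_mem hp hck hnil hP hmg g
  rw [show ⁅m, g⁆ * g = m * g * m⁻¹ by group, conj_pow] at h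
  exact mul_inv_eq_iff_eq_mul.1 h

end PrimePowers

instance subPow_normal {G : Type*} [Group G] (N : Subgroup G) [N.Normal] (m : ℕ) :
    (subPow N m).Normal where
  conj_mem a ha g := by
    have : subPow N m ≤ (subPow N m).comap (MulAut.conj g).toMonoidHom := by
      refine (Subgroup.closure_le _).2 ?_
      rintro _ ⟨n, hn, rfl⟩
      exact Subgroup.subset_closure ⟨g * n * g⁻¹, Subgroup.Normal.conj_mem ‹_› n hn g, conj_pow⟩
    exact this ha

theorem commutator_subPow_prime_pow_le {G : Type*} [Group G] {p c k : ℕ} (hp : p.Prime)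
    (hck : c < p ^ k) (hnil : (⊤ : Subgroup G).lowerCentralSeries c = ⊥)
    (N : Subgroup G) [N.Normal] : ⁅N, subPow ⊤ (p ^ k)⁆ ≤ subPow N p := by
  let π := QuotientGroup.mk' (subPow N p)
  have hπ : Function.Surjective π := QuotientGroup.mk'_surjective _
  have hnilQ : (⊤ : Subgroup (G ⧸ subPow N p)).lowerCentralSeries c = ⊥ := by
    rw [← Subgroup.map_top_of_surjective π hπ, ← Subgroup.map_lowerCentralSeries, hnil,
      Subgroup.map_bot]
  have hexp : ∀ a ∈ N.map π, a ^ p = 1 := by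
    rintro _ ⟨n, hn, rfl⟩
    rw [← map_pow, ← MonoidHom.mem_ker, QuotientGroup.ker_mk']
    exact Subgroup.subset_closure ⟨n, hn, rfl⟩
  have : (N.map π).Normal := Subgroup.Normal.map ‹_› π hπ
  have hcent : (subPow ⊤ (p ^ k)).map π ≤ Subgroup.centralizer (N.map π) := by
    refine Subgroup.map_le_iff_le_comap.2 <| (Subgroup.closure_le _).2 ?_
    rintro _ ⟨g, -, rfl⟩
    exact Subgroup.mem_centralizer_iff.2 fun m hm => by
      rw [map_pow]
      exact (commute_pow_prime_pow_of_mem hp hck hnilQ hexp hm (π g)).eq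
  rw [← QuotientGroup.ker_mk' (subPow N p), ← Subgroup.map_eq_bot_iff, Subgroup.map_commutator,
    Subgroup.commutator_comm, Subgroup.commutator_eq_bot_iff_le_centralizer]
  exact hcent

theorem commutator_with_pk_powers_le_pPowers_odd_general
    {p : ℕ} (hp : p.Prime) (c k : ℕ)
    (hck : c + 1 ≤ p ^ (k - 1))
    {G : Type*} [Group G]
    (hnil : (⊤ : Subgroup G).lowerCentralSeries c = ⊥)
    (K : Subgroup G) (hK : K = subPow (⊤ : Subgroup G) (p ^ k)) :
    (∀ N : Subgroup G, N.Normal → ⁅N, K⁆ ≤ subPow N p) ∧ ⁅K, K⁆ ≤ subPow K p := by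
  have hck' : c < p ^ k :=
    (Nat.lt_of_succ_le hck).trans_le (Nat.pow_le_pow_right hp.pos (k.sub_le 1))
  subst hK
  exact ⟨fun N _ => commutator_subPow_prime_pow_le hp hck' hnil N,
    commutator_subPow_prime_pow_le hp hck' hnil _⟩

/-- Let `p` be odd, `p^{k-1} ≥ c+1`, and `G` a finitely generated nilpotent group of class at
most `c`. With `K = G^{p^k}`, for every normal subgroup `N` of `G` we have `[N,K] ≤ N^p`;
in particular `K` is powerful: `[K,K] ≤ K^p`. -/
theorem commutator_with_pk_powers_le_pPowers_odd
    {p : ℕ} (hp : p.Prime) (hodd : p ≠ 2) (c k : ℕ) (hc : 0 < c) (hk : 0 < k)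
    (hck : c + 1 ≤ p ^ (k - 1))
    {G : Type*} [Group G] (hfg : Group.FG G)
    (hnil : (⊤ : Subgroup G).lowerCentralSeries c = ⊥)
    (K : Subgroup G) (hK : K = subPow (⊤ : Subgroup G) (p ^ k)) :
    (∀ N : Subgroup G, N.Normal → ⁅N, K⁆ ≤ subPow N p) ∧ ⁅K, K⁆ ≤ subPow K p :=
  commutator_with_pk_powers_le_pPowers_odd_general hp c k hck hnil K hK
end
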